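/- arXiv:2511.19140 — 4 statements merged into one kernel-verified Lean document; each statement's English description precedes it below -/
import Mathlib

section
/- For fixed x > |y| ≥ 0 and ε > 0, define φ_ε(x,y) = (ε²/2)(sinh τ + τ) where τ = arcosh((x² − y²)/(2ε²) + 1), and φ₀(x,y) = (x² − y²)/4. Then φ_ε(x,y) > φ₀(x,y). -/
open Real

/-- Inverse hyperbolic cosine on `[1, ∞)`. -/
noncomputable def arcosh (x : ℝ) : ℝ := Real.log (x + Real.sqrt (x ^ 2 - 1))

/-!
With `s = (x² - y²) / (2ε²) > 0` and `τ = arcosh (s + 1) > 0`, the claim reads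
`s < sinh τ + τ`. Since `cosh τ = s + 1` and `cosh τ - sinh τ = exp (-τ) < 1`,
already `s < sinh τ`, and `τ > 0` only adds to it.
-/

theorem arcosh_eq_real_arcosh : _root_.arcosh = Real.arcosh := rfl

theorem Real.cosh_sub_one_lt_sinh_add_self {t : ℝ} (ht : 0 < t) : cosh t - 1 < sinh t + t := by
  have hexp : exp (-t) < 1 := exp_lt_one_iff.mpr (neg_neg_of_pos ht)
  linarith [cosh_sub_sinh t]

theorem Real.sub_one_lt_sinh_arcosh_add_arcosh {a : ℝ} (ha : 1 < a) :
    a - 1 < sinh (arcosh a) + arcosh a := by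
  simpa only [cosh_arcosh ha.le] using cosh_sub_one_lt_sinh_add_self (arcosh_pos ha)

theorem stmt_5 (x y ε : ℝ) (hxy : |y| < x) (hε : 0 < ε) :
    (x ^ 2 - y ^ 2) / 4 <
      ε ^ 2 / 2 * (sinh (_root_.arcosh ((x ^ 2 - y ^ 2) / (2 * ε ^ 2) + 1))
        + _root_.arcosh ((x ^ 2 - y ^ 2) / (2 * ε ^ 2) + 1)) := by
  rw [arcosh_eq_real_arcosh]
  set s := (x ^ 2 - y ^ 2) / (2 * ε ^ 2) with hs
  have hy2 : y ^ 2 < x ^ 2 := sq_lt_sq' (neg_lt_of_abs_lt hxy) (lt_of_abs_lt hxy)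
  have hs_pos : 0 < s := div_pos (sub_pos.mpr hy2) (by positivity)
  have hlhs : (x ^ 2 - y ^ 2) / 4 = ε ^ 2 / 2 * s := by
    rw [hs]; field_simp; ring
  have key := sub_one_lt_sinh_arcosh_add_arcosh (lt_add_of_pos_left 1 hs_pos)
  rw [add_sub_cancel_right] at key
  rw [hlhs]
  exact mul_lt_mul_of_pos_left key (by positivity)
end

section
/- Define for ε > 0 the set A_ε = {(x,y,z) ∈ ℝ³ : x ≥ |y|, |z| ≤ (ε²/2)(sinh τ + τ), τ = arcosh((x²−y²)/(2ε²)+1)} and A₀ = {(x,y,z) : x ≥ 0, 4|z| ≤ x² − y²}. Then for all 0 < ε₁ < ε₂, A₀ ⊆ A_{ε₁} ⊆ A_{ε₂}. -/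
open Real

/-- Attainable set of the `ε`-Lorentzian problem on the Heisenberg group. -/
def attainSet (ε : ℝ) : Set (ℝ × ℝ × ℝ) :=
  {p | p.1 ≥ |p.2.1| ∧
    |p.2.2| ≤ ε ^ 2 / 2 *
      (sinh (_root_.arcosh ((p.1 ^ 2 - p.2.1 ^ 2) / (2 * ε ^ 2) + 1))
        + _root_.arcosh ((p.1 ^ 2 - p.2.1 ^ 2) / (2 * ε ^ 2) + 1))}

/-- Attainable set of the limiting sub-Lorentzian problem. -/
def attainSet₀ : Set (ℝ × ℝ × ℝ) :=
  {p | p.1 ≥ 0 ∧ 4 * |p.2.2| ≤ p.1 ^ 2 - p.2.1 ^ 2}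

/-!
Write `s = x² - y²` and `a = 2ε²`, so that the bound on `|z|` defining `A_ε` is
`(a sinh τ + a τ) / 4` with `cosh τ = s / a + 1`. The first term equals `√(s² + 2as)`, which
increases with `a` and is at least `s`; this gives `A₀ ⊆ A_ε`. For the second term,
`a τ = s τ / (cosh τ - 1)`, and `τ ↦ (cosh τ - 1) / τ` is increasing on `τ > 0` because it is
a secant slope of the convex function `cosh` through `0`; since `τ` decreases as `a` grows,
`a τ` increases with `a`, which gives `A_{ε₁} ⊆ A_{ε₂}`.
-/

lemma convexOn_cosh : ConvexOn ℝ Set.univ cosh := by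
  refine convexOn_univ_of_deriv2_nonneg differentiable_cosh ?_ fun x => ?_
  · simpa only [Real.deriv_cosh] using differentiable_sinh
  · simpa only [Function.iterate_succ, Function.iterate_zero, Function.comp_apply, id,
      Real.deriv_cosh, Real.deriv_sinh] using (cosh_pos x).le

lemma mul_cosh_sub_one_le {a b : ℝ} (ha : 0 ≤ a) (hab : a ≤ b) :
    b * (cosh a - 1) ≤ a * (cosh b - 1) := by
  rcases (ha.trans hab).eq_or_lt with rfl | hb
  · simp [le_antisymm hab ha]
  have hconv := convexOn_cosh.2 (Set.mem_univ b) (Set.mem_univ 0) (div_nonneg ha hb.le)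
    (sub_nonneg.2 ((div_le_one hb).2 hab)) (add_sub_cancel _ _)
  simp only [smul_eq_mul, mul_zero, add_zero, div_mul_cancel₀ a hb.ne', cosh_zero,
    mul_one] at hconv
  have := mul_le_mul_of_nonneg_left hconv hb.le
  field_simp at this
  linarith

lemma mul_sinh_arcosh_div_add_one {s a : ℝ} (hs : 0 ≤ s) (ha : 0 < a) :
    a * sinh (Real.arcosh (s / a + 1)) = √(s ^ 2 + 2 * a * s) := by
  have hu : 1 ≤ s / a + 1 := le_add_of_nonneg_left (div_nonneg hs ha.le)
  rw [sinh_arcosh hu, show s ^ 2 + 2 * a * s = a ^ 2 * ((s / a + 1) ^ 2 - 1) by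
    field_simp; ring, sqrt_mul (sq_nonneg a), sqrt_sq ha.le]

lemma mul_arcosh_div_add_one_le {s a b : ℝ} (hs : 0 ≤ s) (ha : 0 < a) (hab : a ≤ b) :
    a * Real.arcosh (s / a + 1) ≤ b * Real.arcosh (s / b + 1) := by
  rcases hs.eq_or_lt with rfl | hs
  · simp [arcosh_zero]
  have hb : 0 < b := ha.trans_le hab
  have hua : 1 ≤ s / a + 1 := le_add_of_nonneg_left (div_nonneg hs.le ha.le)
  have hub : 1 ≤ s / b + 1 := le_add_of_nonneg_left (div_nonneg hs.le hb.le)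
  have hτ : Real.arcosh (s / b + 1) ≤ Real.arcosh (s / a + 1) :=
    (arcosh_le_arcosh (by linarith) (by linarith)).2 (by gcongr)
  have hslope := mul_cosh_sub_one_le (arcosh_nonneg hub) hτ
  rw [cosh_arcosh hua, cosh_arcosh hub, add_sub_cancel_right, add_sub_cancel_right] at hslope
  set τa := Real.arcosh (s / a + 1)
  set τb := Real.arcosh (s / b + 1)
  rw [mul_div_left_comm, mul_div_left_comm τb, mul_le_mul_iff_of_pos_left hs,
    div_le_div_iff₀ hb ha] at hslope
  linarith

noncomputable def attainBound (ε s : ℝ) : ℝ :=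
  ε ^ 2 / 2 * (sinh (Real.arcosh (s / (2 * ε ^ 2) + 1)) + Real.arcosh (s / (2 * ε ^ 2) + 1))

-- `Real.arcosh` has the same defining formula as `arcosh`, so this holds definitionally.
lemma mem_attainSet {ε : ℝ} {p : ℝ × ℝ × ℝ} :
    p ∈ attainSet ε ↔ |p.2.1| ≤ p.1 ∧ |p.2.2| ≤ attainBound ε (p.1 ^ 2 - p.2.1 ^ 2) :=
  Iff.rfl

lemma attainBound_eq {ε s : ℝ} (hε : ε ≠ 0) (hs : 0 ≤ s) :
    attainBound ε s = (√(s ^ 2 + 2 * (2 * ε ^ 2) * s)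
      + 2 * ε ^ 2 * Real.arcosh (s / (2 * ε ^ 2) + 1)) / 4 := by
  rw [← mul_sinh_arcosh_div_add_one hs (by positivity), attainBound]
  ring

lemma le_attainBound {ε s : ℝ} (hε : ε ≠ 0) (hs : 0 ≤ s) : s / 4 ≤ attainBound ε s := by
  have hsqrt : s ≤ √(s ^ 2 + 2 * (2 * ε ^ 2) * s) :=
    le_sqrt_of_sq_le (le_add_of_nonneg_right (by positivity))
  have harcosh := arcosh_nonneg (le_add_of_nonneg_left (by positivity : 0 ≤ s / (2 * ε ^ 2)))
  rw [attainBound_eq hε hs]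
  gcongr
  linarith [mul_nonneg (by positivity : (0 : ℝ) ≤ 2 * ε ^ 2) harcosh]

lemma attainBound_mono {ε₁ ε₂ s : ℝ} (hs : 0 ≤ s) (h₁ : 0 < ε₁) (h : ε₁ ≤ ε₂) :
    attainBound ε₁ s ≤ attainBound ε₂ s := by
  have hsq : 2 * ε₁ ^ 2 ≤ 2 * ε₂ ^ 2 := by gcongr
  rw [attainBound_eq h₁.ne' hs, attainBound_eq (h₁.trans_le h).ne' hs]
  gcongr ?_ / 4
  exact add_le_add (by gcongr) (mul_arcosh_div_add_one_le hs (by positivity) hsq)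

lemma sq_sub_sq_nonneg_of_abs_le {x y : ℝ} (h : |y| ≤ x) : 0 ≤ x ^ 2 - y ^ 2 :=
  sub_nonneg.2 (sq_le_sq' (abs_le.1 h).1 (abs_le.1 h).2)

theorem stmt_8 (ε₁ ε₂ : ℝ) (h₁ : 0 < ε₁) (h₂ : ε₁ < ε₂) :
    attainSet₀ ⊆ attainSet ε₁ ∧ attainSet ε₁ ⊆ attainSet ε₂ := by
  constructor
  · rintro ⟨x, y, z⟩ ⟨hx, hz⟩
    have hs : 0 ≤ x ^ 2 - y ^ 2 := (mul_nonneg zero_le_four (abs_nonneg z)).trans hz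
    refine mem_attainSet.2 ⟨abs_le_of_sq_le_sq (by linarith) hx, ?_⟩
    exact (le_div_iff₀' four_pos).2 hz |>.trans (le_attainBound h₁.ne' hs)
  · rintro ⟨x, y, z⟩ ⟨hxy, hz⟩
    exact mem_attainSet.2 ⟨hxy, hz.trans (attainBound_mono (sq_sub_sq_nonneg_of_abs_le hxy) h₁ h₂.le)⟩
end

section
/- Let θ > 0, φ ∈ (0, π), and set h₃ = (sinh θ sin φ)/ε for ε > 0. The Jacobian of the exponential map satisfies J = (ε⁴ / (sin³φ sinh²θ)) · (τ sinh τ + (2 − cosh τ + τ sinh τ)/(sin²φ sinh²θ)) > 0 for all τ > 0; in particular J ≠ 0, so there are no conjugate points in the region h₃ ≠ 0. -/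
open Real

theorem stmt_11 (ε θ φ τ : ℝ) (hε : 0 < ε) (hθ : 0 < θ) (hφ : φ ∈ Set.Ioo 0 π)
    (hτ : 0 < τ) :
    0 < ε ^ 4 / (sin φ ^ 3 * sinh θ ^ 2) *
        (τ * sinh τ + (2 - cosh τ + τ * sinh τ) / (sin φ ^ 2 * sinh θ ^ 2)) := by
  have hs : 0 < sin φ := Real.sin_pos_of_pos_of_lt_pi hφ.1 hφ.2
  have hsh : 0 < sinh θ := Real.sinh_pos_iff.2 hθ
  have key : 0 < 2 - cosh τ + τ * sinh τ := by
    have h2 : -τ + 1 < Real.exp (-τ) := Real.add_one_lt_exp (by linarith)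
    have he : 0 < Real.exp τ := Real.exp_pos τ
    have he1 : 1 < Real.exp τ := by have := Real.add_one_lt_exp (show τ ≠ 0 by linarith); linarith
    have hmul : Real.exp τ * Real.exp (-τ) = 1 := by
      rw [← Real.exp_add]; simp
    rw [Real.cosh_eq, Real.sinh_eq]
    nlinarith [sq_nonneg (Real.exp τ - 1), mul_pos he he,
      mul_pos (mul_pos he he) he]
  have h1 : 0 < τ * sinh τ := mul_pos hτ (Real.sinh_pos_iff.2 hτ)
  have hA : 0 < ε ^ 4 / (sin φ ^ 3 * sinh θ ^ 2) := by positivity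
  have hB : 0 < τ * sinh τ + (2 - cosh τ + τ * sinh τ) / (sin φ ^ 2 * sinh θ ^ 2) := by
    have : 0 < (2 - cosh τ + τ * sinh τ) / (sin φ ^ 2 * sinh θ ^ 2) :=
      div_pos key (by positivity)
    linarith
  exact mul_pos hA hB
end

section
/- Define Exp_ε(ψ, c, t) for ε > 0 via θ, φ determined by sinh θ cos φ = sinh ψ and (sinh θ sin φ)/ε = c, with coordinates x = (−h₁ sinh τ + h₂(cosh τ −1))/h₃, y = (h₂ sinh τ − h₁(cosh τ −1))/h₃, z = (sinh τ − τ)/(2h₃²) + (ε²/2)(sinh τ + τ), where h₁ = −cosh θ, h₂ = sinh θ cos φ, h₃ = sinh θ sin φ/ε, τ = h₃ t. Then for fixed ψ ∈ ℝ, c ≠ 0, t > 0, as ε → 0⁺ one has x → (sinh(ψ + ct) − sinh ψ)/c, y → (cosh(ψ + ct) − cosh ψ)/c, z → (sinh(ct) − ct)/(2c²). -/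
open Real Filter

/-- Convergence of the exponential maps of the `ε`-Lorentzian problems on the Heisenberg
group to the exponential map of the limiting sub-Lorentzian problem. The angles `θ ε, φ ε`
are determined by `sinh (θ ε) * cos (φ ε) = sinh ψ` and `sinh (θ ε) * sin (φ ε) = ε * c`,
so that `h₁ = -cosh (θ ε)`, `h₂ = sinh ψ`, `h₃ = c`, `τ = c * t`. -/
theorem stmt_17 (ψ c t : ℝ) (hc : c ≠ 0) (ht : 0 < t)
    (θ φ : ℝ → ℝ)
    (hθφ : ∀ ε : ℝ, 0 < ε →
      sinh (θ ε) * cos (φ ε) = sinh ψ ∧ sinh (θ ε) * sin (φ ε) = ε * c) :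
    Tendsto (fun ε : ℝ =>
        (-(-cosh (θ ε)) * sinh (c * t) + sinh ψ * (cosh (c * t) - 1)) / c)
      (nhdsWithin 0 (Set.Ioi 0))
      (nhds ((sinh (ψ + c * t) - sinh ψ) / c)) ∧
    Tendsto (fun ε : ℝ =>
        (sinh ψ * sinh (c * t) - (-cosh (θ ε)) * (cosh (c * t) - 1)) / c)
      (nhdsWithin 0 (Set.Ioi 0))
      (nhds ((cosh (ψ + c * t) - cosh ψ) / c)) ∧
    Tendsto (fun ε : ℝ =>
        (sinh (c * t) - c * t) / (2 * c ^ 2) + ε ^ 2 / 2 * (sinh (c * t) + c * t))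
      (nhdsWithin 0 (Set.Ioi 0))
      (nhds ((sinh (c * t) - c * t) / (2 * c ^ 2))) := by
  have key : ∀ ε : ℝ, 0 < ε →
      cosh (θ ε) = Real.sqrt (1 + sinh ψ ^ 2 + (ε * c) ^ 2) := by
    intro ε hε
    obtain ⟨h1, h2⟩ := hθφ ε hε
    have hsq : cosh (θ ε) ^ 2 = 1 + sinh ψ ^ 2 + (ε * c) ^ 2 := by
      rw [Real.cosh_sq, ← h1, ← h2]
      have := Real.sin_sq_add_cos_sq (φ ε)
      nlinarith [this]
    rw [← hsq, Real.sqrt_sq (Real.cosh_pos (θ ε)).le]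
  have hlim : Tendsto (fun ε : ℝ => cosh (θ ε)) (nhdsWithin 0 (Set.Ioi 0))
      (nhds (cosh ψ)) := by
    have hcont : Tendsto (fun ε : ℝ => Real.sqrt (1 + sinh ψ ^ 2 + (ε * c) ^ 2))
        (nhdsWithin 0 (Set.Ioi 0)) (nhds (Real.sqrt (1 + sinh ψ ^ 2 + (0 * c) ^ 2))) := by
      apply Tendsto.mono_left _ nhdsWithin_le_nhds
      exact (Continuous.sqrt (by continuity)).tendsto 0
    have heq : Real.sqrt (1 + sinh ψ ^ 2 + (0 * c) ^ 2) = cosh ψ := by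
      have : (1 : ℝ) + sinh ψ ^ 2 + (0 * c) ^ 2 = cosh ψ ^ 2 := by
        rw [Real.cosh_sq]; ring
      rw [this, Real.sqrt_sq (Real.cosh_pos ψ).le]
    rw [heq] at hcont
    refine hcont.congr' ?_
    filter_upwards [self_mem_nhdsWithin] with ε hε
    exact (key ε hε).symm
  refine ⟨?_, ?_, ?_⟩
  · have : (sinh (ψ + c * t) - sinh ψ) / c
        = (-(-cosh ψ) * sinh (c * t) + sinh ψ * (cosh (c * t) - 1)) / c := by
      rw [Real.sinh_add]; ring
    rw [this]
    exact (((hlim.neg.neg.mul tendsto_const_nhds).add tendsto_const_nhds).div_const c)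
  · have : (cosh (ψ + c * t) - cosh ψ) / c
        = (sinh ψ * sinh (c * t) - (-cosh ψ) * (cosh (c * t) - 1)) / c := by
      rw [Real.cosh_add]; ring
    rw [this]
    exact ((tendsto_const_nhds.sub (hlim.neg.mul tendsto_const_nhds)).div_const c)
  · have h0 : Tendsto (fun ε : ℝ => ε ^ 2 / 2 * (sinh (c * t) + c * t))
        (nhdsWithin 0 (Set.Ioi 0)) (nhds 0) := by
      have : Tendsto (fun ε : ℝ => ε ^ 2 / 2 * (sinh (c * t) + c * t)) (nhds 0)
          (nhds ((0:ℝ) ^ 2 / 2 * (sinh (c * t) + c * t))) := by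
        apply Continuous.tendsto; continuity
      simpa using this.mono_left nhdsWithin_le_nhds
    simpa using (tendsto_const_nhds.add h0)
end
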